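/- Let Φ = f + g with f : ℝ^d → ℝ convex with L-Lipschitz gradient and g : ℝ^d → ℝ continuous convex, let x⋆ be a minimizer of Φ, let r > 2 and 0 < s ≤ 1/L. For the FISTA iterates x_k = y_{k−1} − s·G_s(y_{k−1}), y_k = x_k + ((k−1)/(k+r))(x_k − x_{k−1}) with x₀ = y₀ ∈ ℝ^d, one has lim_{k→∞} k² · ( min_{0 ≤ i ≤ k} Φ(x_i) − Φ(x⋆) ) = 0. -/

import Mathlib

/-!
The proximal-gradient step satisfies the fundamental inequality
`Φ (w - s • G w) ≤ Φ z + ⟪G w, w - z⟫ - s / 2 * ‖G w‖ ^ 2` for every `z` (descent lemma and gradient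
inequality for `f`, optimality of the proximal point for `g`). Taking `z = x k` and `z = x⋆` with
the weights `t k = (k + r) / r`, the energy
`t k ^ 2 * (Φ (x (k + 1)) - Φ x⋆) + ‖t k • x (k + 1) - (t k - 1) • x k - x⋆‖ ^ 2 / (2 * s)`
drops by at least `(r - 2) / r ^ 2 * (k + 1) * (Φ (x (k + 1)) - Φ x⋆)` per step, so for `r > 2`
the series `∑ k * (Φ (x k) - Φ x⋆)` converges. Its tail over `k / 2 < j ≤ k` tends to zero and
dominates `k ^ 2 / 4` times the best gap `min_{i ≤ k} Φ (x i) - Φ x⋆`.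
-/

open scoped RealInnerProductSpace Topology

open Filter Finset

theorem nonneg_of_forall_mem_Ioc_nonneg_add_mul {a b : ℝ}
    (h : ∀ t ∈ Set.Ioc (0 : ℝ) 1, 0 ≤ a + t * b) : 0 ≤ a := by
  have hlim : Tendsto (fun t : ℝ => a + t * b) (𝓝[>] 0) (𝓝 a) :=
    ((continuous_const.add (continuous_id.mul continuous_const)).tendsto' 0 a (by simp)).mono_left
      nhdsWithin_le_nhds
  exact ge_of_tendsto hlim <| eventually_of_mem (Ioc_mem_nhdsGT zero_lt_one) h

theorem summable_of_add_le {a b : ℕ → ℝ} (ha : ∀ k, 0 ≤ a k) (hb : ∀ k, 0 ≤ b k)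
    (h : ∀ k, b (k + 1) + a k ≤ b k) : Summable a := by
  have htelescope (n : ℕ) : b n + ∑ i ∈ range n, a i ≤ b 0 := by
    induction n with
    | zero => simp
    | succ n ih => rw [sum_range_succ]; linarith [h n]
  exact summable_of_sum_range_le ha fun n => by linarith [htelescope n, hb n]

theorem tendsto_sum_Ico_of_summable {α : Type*} [AddCommGroup α] [TopologicalSpace α]
    [IsTopologicalAddGroup α] {f : ℕ → α} (hf : Summable f) {m n : ℕ → ℕ}
    (hm : Tendsto m atTop atTop) (hn : Tendsto n atTop atTop) (hmn : ∀ k, m k ≤ n k) :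
    Tendsto (fun k => ∑ j ∈ Ico (m k) (n k), f j) atTop (𝓝 0) := by
  have hS := hf.hasSum.tendsto_sum_nat
  simpa [sum_Ico_eq_sub _ (hmn _)] using (hS.comp hn).sub (hS.comp hm)

theorem sq_mul_le_four_mul_sum_Ico {δ : ℕ → ℝ} {M : ℝ} (hM : 0 ≤ M) (k : ℕ)
    (hδ : ∀ j ∈ Ico (k / 2 + 1) (k + 1), M ≤ δ j) :
    (k : ℝ) ^ 2 * M ≤ 4 * ∑ j ∈ Ico (k / 2 + 1) (k + 1), (j : ℝ) * δ j := by
  have hhalf : ∀ j ∈ Ico (k / 2 + 1) (k + 1), (k : ℝ) / 2 ≤ j := fun j hj => by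
    rw [mem_Ico] at hj
    rw [div_le_iff₀ two_pos]
    exact_mod_cast (by omega : k ≤ j * 2)
  have hterm : ∀ j ∈ Ico (k / 2 + 1) (k + 1), (k : ℝ) / 2 * M ≤ j * δ j := fun j hj =>
    mul_le_mul (hhalf j hj) (hδ j hj) hM (Nat.cast_nonneg j)
  have hcard : (k : ℝ) / 2 ≤ #(Ico (k / 2 + 1) (k + 1)) := by
    rw [Nat.card_Ico, div_le_iff₀ two_pos]
    exact_mod_cast (by omega : k ≤ (k + 1 - (k / 2 + 1)) * 2)
  have hsum := card_nsmul_le_sum _ _ _ hterm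
  rw [nsmul_eq_mul] at hsum
  nlinarith [mul_le_mul_of_nonneg_right hcard (by positivity : 0 ≤ (k : ℝ) / 2 * M)]

theorem tendsto_sq_mul_inf'_sub_of_summable {a : ℕ → ℝ} {c : ℝ} (hc : ∀ i, c ≤ a i)
    (hsum : Summable fun i : ℕ => (i : ℝ) * (a i - c)) :
    Tendsto (fun k : ℕ => (k : ℝ) ^ 2 * ((range (k + 1)).inf' nonempty_range_add_one a - c))
      atTop (𝓝 0) := by
  have hgap (k : ℕ) : 0 ≤ (range (k + 1)).inf' nonempty_range_add_one a - c :=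
    sub_nonneg.2 (le_inf' _ _ fun i _ => hc i)
  have htail := tendsto_sum_Ico_of_summable hsum (m := fun k => k / 2 + 1) (n := fun k => k + 1)
    ((tendsto_add_atTop_nat 1).comp (Nat.tendsto_div_const_atTop two_ne_zero))
    (tendsto_add_atTop_nat 1) fun k => by omega
  have hbound (k : ℕ) := sq_mul_le_four_mul_sum_Ico (hgap k) k fun j hj =>
    sub_le_sub_right (inf'_le a (mem_range.2 (mem_Ico.1 hj).2)) c
  exact squeeze_zero (fun k => mul_nonneg (sq_nonneg _) (hgap k)) hbound
    (by simpa using htail.const_mul 4)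

section ConvexAnalysis

variable {E : Type*} [NormedAddCommGroup E] [InnerProductSpace ℝ E]

theorem HasGradientAt.hasDerivAt_add_smul [CompleteSpace E] {f : E → ℝ} {f' x u : E} {t : ℝ}
    (hf : HasGradientAt f f' (x + t • u)) :
    HasDerivAt (fun t : ℝ => f (x + t • u)) ⟪f', u⟫ t := by
  have hline : HasDerivAt (fun t : ℝ => x + t • u) u t := by
    simpa using ((hasDerivAt_id t).smul_const u).const_add x
  simpa [InnerProductSpace.toDual_apply_apply, Function.comp_def] using
    hf.hasFDerivAt.comp_hasDerivAt t hline

theorem ConvexOn.add_inner_le_of_hasGradientAt [CompleteSpace E] {f : E → ℝ} {f' x : E}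
    (hf : ConvexOn ℝ Set.univ f) (hx : HasGradientAt f f' x) (z : E) :
    f x + ⟪f', z - x⟫ ≤ f z := by
  have hline : ConvexOn ℝ Set.univ (fun t : ℝ => f (x + t • (z - x))) := by
    have := hf.comp_affineMap (AffineMap.lineMap x z)
    simpa [Function.comp_def, AffineMap.lineMap_apply, add_comm x] using this
  have hx0 : HasGradientAt f f' (x + (0 : ℝ) • (z - x)) := by simpa using hx
  have := hline.le_slope_of_hasDerivAt (Set.mem_univ 0) (Set.mem_univ 1) one_pos
    hx0.hasDerivAt_add_smul
  simp only [slope_def_field, one_smul, add_sub_cancel, zero_smul, add_zero, sub_zero,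
    div_one] at this
  linarith

theorem le_add_inner_add_sq_of_norm_gradient_sub_le [CompleteSpace E] {f : E → ℝ} {f' : E → E}
    {L : ℝ} (hf : ∀ x, HasGradientAt f (f' x) x) (hlip : ∀ x y, ‖f' x - f' y‖ ≤ L * ‖x - y‖)
    (x z : E) :
    f z ≤ f x + ⟪f' x, z - x⟫ + L / 2 * ‖z - x‖ ^ 2 := by
  set u := z - x
  have hderiv (t : ℝ) : HasDerivAt (fun t : ℝ => f (x + t • u) - t * ⟪f' x, u⟫)
      (⟪f' (x + t • u), u⟫ - ⟪f' x, u⟫) t :=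
    (hf _).hasDerivAt_add_smul.sub ((hasDerivAt_id t).mul_const _ |>.congr_deriv (one_mul _))
  have hbound : ∀ t ∈ Set.Ico (0 : ℝ) 1, ⟪f' (x + t • u), u⟫ - ⟪f' x, u⟫ ≤ L * ‖u‖ ^ 2 * t := by
    intro t ht
    calc ⟪f' (x + t • u), u⟫ - ⟪f' x, u⟫ = ⟪f' (x + t • u) - f' x, u⟫ := (inner_sub_left ..).symm
      _ ≤ ‖f' (x + t • u) - f' x‖ * ‖u‖ := real_inner_le_norm _ _
      _ ≤ L * ‖t • u‖ * ‖u‖ := by gcongr; simpa using hlip (x + t • u) x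
      _ = L * ‖u‖ ^ 2 * t := by rw [norm_smul, Real.norm_of_nonneg ht.1]; ring
  have hquad (t : ℝ) :
      HasDerivAt (fun t : ℝ => f x + L * ‖u‖ ^ 2 / 2 * t ^ 2) (L * ‖u‖ ^ 2 * t) t := by
    simpa using (((hasDerivAt_pow 2 t).const_mul (L * ‖u‖ ^ 2 / 2)).const_add (f x)).congr_deriv
      (by ring)
  have := image_le_of_deriv_right_le_deriv_boundary
    (fun t _ => (hderiv t).continuousAt.continuousWithinAt)
    (fun t _ => (hderiv t).hasDerivWithinAt) (by simp)
    (fun t _ => (hquad t).continuousAt.continuousWithinAt)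
    (fun t _ => (hquad t).hasDerivWithinAt) hbound (Set.right_mem_Icc.2 zero_le_one)
  simp only [one_smul, one_mul, one_pow, u, add_sub_cancel] at this
  linarith

theorem IsMinOn.add_inner_le_of_prox {g : E → ℝ} {s : ℝ} (hs : 0 < s) (hg : ConvexOn ℝ Set.univ g)
    {v p : E} (hp : IsMinOn (fun w => 1 / (2 * s) * ‖w - v‖ ^ 2 + g w) Set.univ p) (z : E) :
    g p + s⁻¹ * ⟪v - p, z - p⟫ ≤ g z := by
  suffices 0 ≤ g z - g p - s⁻¹ * ⟪v - p, z - p⟫ by linarith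
  refine nonneg_of_forall_mem_Ioc_nonneg_add_mul (b := ‖z - p‖ ^ 2 / (2 * s)) fun t ht => ?_
  have hmin := isMinOn_univ_iff.mp hp ((1 - t) • p + t • z)
  have hconv := hg.2 (Set.mem_univ p) (Set.mem_univ z) (sub_nonneg.2 ht.2) ht.1.le
    (sub_add_cancel 1 t)
  have hnorm : ‖(1 - t) • p + t • z - v‖ ^ 2
      = ‖p - v‖ ^ 2 - 2 * t * ⟪v - p, z - p⟫ + t ^ 2 * ‖z - p‖ ^ 2 := by
    rw [show (1 - t) • p + t • z - v = (p - v) + t • (z - p) by module, norm_add_sq_real,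
      real_inner_smul_right, norm_smul, Real.norm_of_nonneg ht.1.le, ← neg_sub v p, inner_neg_left]
    ring
  rw [hnorm] at hmin
  rw [smul_eq_mul, smul_eq_mul] at hconv
  have hcompare : 0 ≤ 1 / (2 * s) * (t ^ 2 * ‖z - p‖ ^ 2 - 2 * t * ⟪v - p, z - p⟫)
      + t * (g z - g p) := by
    linarith
  refine (mul_nonneg_iff_of_pos_left ht.1).mp (hcompare.trans_eq ?_)
  field_simp
  ring

theorem proxGrad_fundamental_inequality [CompleteSpace E] {f g : E → ℝ} {f' : E → E} {L s : ℝ}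
    (hs : 0 < s) (hsL : s ≤ 1 / L)
    (hfconv : ConvexOn ℝ Set.univ f) (hf' : ∀ x, HasGradientAt f (f' x) x)
    (hlip : ∀ x y, ‖f' x - f' y‖ ≤ L * ‖x - y‖) (hgconv : ConvexOn ℝ Set.univ g) {P G : E → E}
    (hP : ∀ x, IsMinOn (fun z => 1 / (2 * s) * ‖z - (x - s • f' x)‖ ^ 2 + g z) Set.univ (P x))
    (hG : ∀ x, G x = s⁻¹ • (x - P x)) (w z : E) :
    f (P w) + g (P w) ≤ f z + g z + ⟪G w, w - z⟫ - s / 2 * ‖G w‖ ^ 2 := by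
  have hLs : L ≤ s⁻¹ := by
    rcases le_or_gt L 0 with hL | hL
    · exact hL.trans (inv_pos.2 hs).le
    · exact (le_inv_comm₀ hL hs).2 (one_div L ▸ hsL)
  have hdescent := le_add_inner_add_sq_of_norm_gradient_sub_le hf' hlip w (P w)
  have hgrad := hfconv.add_inner_le_of_hasGradientAt (hf' w) z
  have hprox := (hP w).add_inner_le_of_prox hs hgconv z
  rw [show w - s • f' w - P w = (w - P w) - s • f' w by abel, inner_sub_left,
    real_inner_smul_left, mul_sub, ← mul_assoc, inv_mul_cancel₀ hs.ne', one_mul] at hprox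
  rw [norm_sub_rev] at hdescent
  have hsq : L / 2 * ‖w - P w‖ ^ 2 ≤ s⁻¹ / 2 * ‖w - P w‖ ^ 2 := by gcongr
  have hinner_f' : ⟪f' w, P w - w⟫ + ⟪f' w, z - P w⟫ = ⟪f' w, z - w⟫ := by
    rw [← inner_add_right, sub_add_sub_cancel']
  have hinner_G : ⟪G w, w - z⟫ - s / 2 * ‖G w‖ ^ 2
      = s⁻¹ / 2 * ‖w - P w‖ ^ 2 - s⁻¹ * ⟪w - P w, z - P w⟫ := by
    rw [hG, show w - z = (w - P w) - (z - P w) by abel, inner_sub_right, real_inner_smul_left,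
      real_inner_smul_left, real_inner_self_eq_norm_sq, norm_smul,
      Real.norm_of_nonneg (inv_pos.2 hs).le]
    field_simp
    ring
  linarith

end ConvexAnalysis

noncomputable def fistaWeight (r : ℝ) (k : ℕ) : ℝ := (k + r) / r

theorem one_le_fistaWeight {r : ℝ} (hr : 0 < r) (k : ℕ) : 1 ≤ fistaWeight r k := by
  rw [fistaWeight, le_div_iff₀ hr]
  linarith [(k.cast_nonneg : (0 : ℝ) ≤ k)]

theorem fistaWeight_succ_mul_sub_one_add_le {r : ℝ} (hr : r ≠ 0) (k : ℕ) :
    fistaWeight r (k + 1) * (fistaWeight r (k + 1) - 1) + (r - 2) / r ^ 2 * (k + 1)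
      ≤ fistaWeight r k ^ 2 := by
  have hgap : fistaWeight r k ^ 2 - fistaWeight r (k + 1) * (fistaWeight r (k + 1) - 1)
      - (r - 2) / r ^ 2 * (k + 1) = (r - 1) ^ 2 / r ^ 2 := by
    simp only [fistaWeight]
    push_cast
    field_simp
    ring
  linarith [show 0 ≤ (r - 1) ^ 2 / r ^ 2 by positivity]

section FISTA

variable {E : Type*} [NormedAddCommGroup E] [InnerProductSpace ℝ E] {Φ : E → ℝ} {G : E → E}
  {s : ℝ}

theorem fista_lyapunov_step (hs : s ≠ 0) {w : E}
    (hw : ∀ z, Φ (w - s • G w) ≤ Φ z + ⟪G w, w - z⟫ - s / 2 * ‖G w‖ ^ 2)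
    {t : ℝ} (ht : 1 ≤ t) (u xstar : E) :
    t ^ 2 * (Φ (w - s • G w) - Φ xstar) + ‖t • (w - s • G w) - (t - 1) • u - xstar‖ ^ 2 / (2 * s)
      ≤ t * (t - 1) * (Φ u - Φ xstar) + ‖t • w - (t - 1) • u - xstar‖ ^ 2 / (2 * s) := by
  set v := t • w - (t - 1) • u - xstar
  have hv : ⟪v, G w⟫ = (t - 1) * ⟪G w, w - u⟫ + ⟪G w, w - xstar⟫ := by
    rw [show v = (t - 1) • (w - u) + (w - xstar) by module, inner_add_left, real_inner_smul_left,
      real_inner_comm, real_inner_comm (w - xstar)]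
  have hnorm : ‖t • (w - s • G w) - (t - 1) • u - xstar‖ ^ 2 / (2 * s)
      = ‖v‖ ^ 2 / (2 * s) - t * ⟪v, G w⟫ + s * t ^ 2 / 2 * ‖G w‖ ^ 2 := by
    rw [show t • (w - s • G w) - (t - 1) • u - xstar = v - (s * t) • G w by module,
      norm_sub_sq_real, real_inner_smul_right, norm_smul, mul_pow, Real.norm_eq_abs, sq_abs]
    field_simp
  have hu := mul_le_mul_of_nonneg_left (hw u)
    (mul_nonneg (by linarith) (by linarith) : 0 ≤ t * (t - 1))
  have hstar := mul_le_mul_of_nonneg_left (hw xstar) (by linarith : 0 ≤ t)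
  rw [hnorm, hv]
  linarith

theorem fista_momentum {r : ℝ} (hr : 0 < r) {x y : ℕ → E}
    (hy : ∀ k : ℕ, y (k + 1) = x (k + 1) + ((k : ℝ) / (k + 1 + r)) • (x (k + 1) - x k)) (k : ℕ) :
    fistaWeight r (k + 1) • y (k + 1) - (fistaWeight r (k + 1) - 1) • x (k + 1)
      = fistaWeight r k • x (k + 1) - (fistaWeight r k - 1) • x k := by
  have : (k : ℝ) + 1 + r ≠ 0 := by positivity
  rw [hy]
  simp only [fistaWeight]
  push_cast
  match_scalars <;> field_simp <;> ring

theorem fista_summable_mul_sub {r : ℝ} (hs : 0 < s) (hr : 2 < r)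
    (hfund : ∀ w z, Φ (w - s • G w) ≤ Φ z + ⟪G w, w - z⟫ - s / 2 * ‖G w‖ ^ 2)
    {xstar : E} (hstar : ∀ z, Φ xstar ≤ Φ z) {x y : ℕ → E}
    (hx : ∀ k, x (k + 1) = y k - s • G (y k))
    (hy : ∀ k : ℕ, y (k + 1) = x (k + 1) + ((k : ℝ) / (k + 1 + r)) • (x (k + 1) - x k)) :
    Summable fun k : ℕ => (k : ℝ) * (Φ (x k) - Φ xstar) := by
  have hr0 : 0 < r := by linarith
  set t := fistaWeight r
  have hgap (k : ℕ) : 0 ≤ Φ (x k) - Φ xstar := sub_nonneg.2 (hstar _)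
  have hstep (k : ℕ) :=
    fista_lyapunov_step hs.ne' (hfund (y k)) (one_le_fistaWeight hr0 k) (x k) xstar
  have hc : 0 < (r - 2) / r ^ 2 := by have := sub_pos.2 hr; positivity
  have hsum := summable_of_add_le
    (a := fun k => (r - 2) / r ^ 2 * (((k : ℝ) + 1) * (Φ (x (k + 1)) - Φ xstar)))
    (b := fun k => t k ^ 2 * (Φ (x (k + 1)) - Φ xstar)
      + ‖t k • x (k + 1) - (t k - 1) • x k - xstar‖ ^ 2 / (2 * s))
    (fun k => by have := hgap (k + 1); positivity)
    (fun k => by have := hgap (k + 1); positivity) fun k => by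
      have hweight := mul_le_mul_of_nonneg_right
        (fistaWeight_succ_mul_sub_one_add_le hr0.ne' k) (hgap (k + 1))
      have hdecay := hstep (k + 1)
      rw [← hx, fista_momentum hr0 hy] at hdecay
      linarith
  rw [← summable_nat_add_iff 1]
  simpa [summable_mul_left_iff hc.ne'] using hsum

end FISTA

theorem fista_objective_little_o_general {d : ℕ}
    (f g : EuclideanSpace ℝ (Fin d) → ℝ)
    (f' : EuclideanSpace ℝ (Fin d) → EuclideanSpace ℝ (Fin d))
    (L s r : ℝ) (hs : 0 < s)
    (hfconv : ConvexOn ℝ Set.univ f)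
    (hf' : ∀ x, HasGradientAt f (f' x) x)
    (hlip : ∀ x y, ‖f' x - f' y‖ ≤ L * ‖x - y‖)
    (hgconv : ConvexOn ℝ Set.univ g)
    (Φ : EuclideanSpace ℝ (Fin d) → ℝ) (hΦ : ∀ x, Φ x = f x + g x)
    (P : EuclideanSpace ℝ (Fin d) → EuclideanSpace ℝ (Fin d))
    (hP : ∀ x, IsMinOn (fun z => 1 / (2 * s) * ‖z - (x - s • f' x)‖ ^ 2 + g z) Set.univ (P x))
    (G : EuclideanSpace ℝ (Fin d) → EuclideanSpace ℝ (Fin d))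
    (hG : ∀ x, G x = s⁻¹ • (x - P x))
    (xstar : EuclideanSpace ℝ (Fin d)) (hstar : IsMinOn Φ Set.univ xstar)
    (x y : ℕ → EuclideanSpace ℝ (Fin d))
    (hx : ∀ k : ℕ, x (k + 1) = y k - s • G (y k))
    (hy : ∀ k : ℕ, y (k + 1) =
      x (k + 1) + ((((k : ℝ) + 1) - 1) / (((k : ℝ) + 1) + r)) • (x (k + 1) - x k))
    (hrgt : 2 < r) (hsL : s ≤ 1 / L) :
    Filter.Tendsto
      (fun k : ℕ => (k : ℝ) ^ 2 *
        (Finset.inf' (Finset.range (k + 1)) Finset.nonempty_range_add_one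
          (fun i => Φ (x i)) - Φ xstar))
      Filter.atTop (𝓝 0) := by
  have hstar' (z) : Φ xstar ≤ Φ z := hstar (Set.mem_univ z)
  have hPG (w) : w - s • G w = P w := by
    rw [hG, smul_smul, mul_inv_cancel₀ hs.ne', one_smul, sub_sub_cancel]
  have hfund (w z) : Φ (w - s • G w) ≤ Φ z + ⟪G w, w - z⟫ - s / 2 * ‖G w‖ ^ 2 := by
    rw [hPG, hΦ, hΦ]
    exact proxGrad_fundamental_inequality hs hsL hfconv hf' hlip hgconv hP hG w z
  refine tendsto_sq_mul_inf'_sub_of_summable (fun i => hstar' (x i)) ?_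
  exact fista_summable_mul_sub hs hrgt hfund hstar' hx fun k => by rw [hy k, add_sub_cancel_right]

/-- **FISTA little-o rate of objective values for `r > 2`.** For step size `0 < s ≤ 1/L`,
`lim_{k→∞} k²·(min_{0 ≤ i ≤ k} Φ(x_i) − Φ(x⋆)) = 0`. -/
theorem fista_objective_little_o {d : ℕ}
    (f g : EuclideanSpace ℝ (Fin d) → ℝ)
    (f' : EuclideanSpace ℝ (Fin d) → EuclideanSpace ℝ (Fin d))
    (L s r : ℝ) (hL : 0 < L) (hs : 0 < s) (hr : 2 ≤ r)
    (hfconv : ConvexOn ℝ Set.univ f)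
    (hf' : ∀ x, HasGradientAt f (f' x) x)
    (hlip : ∀ x y, ‖f' x - f' y‖ ≤ L * ‖x - y‖)
    (hgconv : ConvexOn ℝ Set.univ g) (hgcont : Continuous g)
    (Φ : EuclideanSpace ℝ (Fin d) → ℝ) (hΦ : ∀ x, Φ x = f x + g x)
    (P : EuclideanSpace ℝ (Fin d) → EuclideanSpace ℝ (Fin d))
    (hP : ∀ x, IsMinOn (fun z => 1 / (2 * s) * ‖z - (x - s • f' x)‖ ^ 2 + g z) Set.univ (P x))
    (G : EuclideanSpace ℝ (Fin d) → EuclideanSpace ℝ (Fin d))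
    (hG : ∀ x, G x = s⁻¹ • (x - P x))
    (xstar : EuclideanSpace ℝ (Fin d)) (hstar : IsMinOn Φ Set.univ xstar)
    (x y : ℕ → EuclideanSpace ℝ (Fin d)) (hxy0 : x 0 = y 0)
    (hx : ∀ k : ℕ, x (k + 1) = y k - s • G (y k))
    (hy : ∀ k : ℕ, y (k + 1) =
      x (k + 1) + ((((k : ℝ) + 1) - 1) / (((k : ℝ) + 1) + r)) • (x (k + 1) - x k))
    (hrgt : 2 < r) (hsL : s ≤ 1 / L) :
    Filter.Tendsto
      (fun k : ℕ => (k : ℝ) ^ 2 *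
        (Finset.inf' (Finset.range (k + 1)) Finset.nonempty_range_add_one
          (fun i => Φ (x i)) - Φ xstar))
      Filter.atTop (𝓝 0) :=
  fista_objective_little_o_general f g f' L s r hs hfconv hf' hlip hgconv Φ hΦ P hP G hG xstar hstar
    x y hx hy hrgt hsL
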